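/- For every integer p ≥ 2, let C = {x ∈ ℝ^p : x_1 > x_2 > ⋯ > x_p > 0 and 2x_1 < 1} and C_s = {x ∈ ℝ^p : x_1 > x_2 > ⋯ > x_p > 0 and x_1 + x_2 < 1}. Then the Lebesgue volume of C_s equals 2 times the Lebesgue volume of C. -/
import Mathlib

open MeasureTheory

private theorem volume_Cs_eq_Cp_aux (p : ℕ) (hp : 2 ≤ p) (i0 i1 : Fin p)
    (h0 : (i0 : ℕ) = 0) (h1 : (i1 : ℕ) = 1) :
    volume {x : Fin p → ℝ | (∀ i j : Fin p, i < j → x j < x i) ∧ (∀ i, 0 < x i) ∧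
        x i0 + x i1 < 1}
      = 2 *
        volume {x : Fin p → ℝ | (∀ i j : Fin p, i < j → x j < x i) ∧ (∀ i, 0 < x i) ∧
          2 * x i0 < 1} := by
  classical
  set A : Set (Fin p → ℝ) := {x | (∀ i j : Fin p, i < j → x j < x i) ∧ (∀ i, 0 < x i) ∧
        x i0 + x i1 < 1} with hA
  set C : Set (Fin p → ℝ) := {x | (∀ i j : Fin p, i < j → x j < x i) ∧ (∀ i, 0 < x i) ∧
        2 * x i0 < 1} with hC
  have h01 : i0 < i1 := by simp [Fin.lt_def, h0, h1]
  have hne0 : ∀ j : Fin p, j ≠ i0 → i0 < j := by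
    intro j hj
    have : (j : ℕ) ≠ 0 := fun h => hj (Fin.ext (by omega))
    simp [Fin.lt_def, h0]; omega
  have hle1 : ∀ j : Fin p, i0 < j → i1 ≤ j := by
    intro j hj
    simp only [Fin.lt_def, Fin.le_def, h0, h1] at hj ⊢; omega
  -- the reflection
  set f : Fin p → ℝ → ℝ := fun i => if i = i0 then (fun t => 1 - t) else id with hf
  set T : (Fin p → ℝ) → (Fin p → ℝ) := fun x i => f i (x i) with hTdef
  have hT0 : ∀ x : Fin p → ℝ, T x i0 = 1 - x i0 := fun x => by simp [hTdef, hf]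
  have hTj : ∀ (x : Fin p → ℝ) (j : Fin p), j ≠ i0 → T x j = x j := by
    intro x j hj; simp [hTdef, hf, hj]
  have hfmp : ∀ i : Fin p, MeasurePreserving (f i) volume volume := by
    intro i
    by_cases h : i = i0
    · have : MeasurePreserving (fun t : ℝ => 1 + -t) volume volume :=
        (measurePreserving_add_left volume 1).comp (Measure.measurePreserving_neg volume)
      have heq : (fun t : ℝ => 1 - t) = fun t : ℝ => 1 + -t := by
        funext t; ring
      simp only [hf, h, if_pos rfl, heq]
      simpa using this
    · simpa [hf, h] using MeasurePreserving.id (volume : Measure ℝ)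
  have hT : MeasurePreserving T volume volume := volume_preserving_pi hfmp
  -- measurability of C
  have hCmeas : MeasurableSet C := by
    have : C = (⋂ i, ⋂ j, {x : Fin p → ℝ | i < j → x j < x i}) ∩
        ((⋂ i, {x : Fin p → ℝ | 0 < x i}) ∩ {x : Fin p → ℝ | 2 * x i0 < 1}) := by
      ext x; simp [hC, Set.mem_iInter, forall_and]
    rw [this]
    refine (MeasurableSet.iInter fun i => MeasurableSet.iInter fun j => ?_).inter
      ((MeasurableSet.iInter fun i => ?_).inter ?_)
    · by_cases h : i < j
      · simp only [h, true_implies]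
        exact measurableSet_lt (measurable_pi_apply j) (measurable_pi_apply i)
      · simp only [h, false_implies]; simp
    · exact measurableSet_lt measurable_const (measurable_pi_apply i)
    · exact measurableSet_lt ((measurable_pi_apply i0).const_mul 2) measurable_const
  have hS : MeasurableSet {x : Fin p → ℝ | x i0 < 1/2} :=
    measurableSet_lt (measurable_pi_apply i0) measurable_const
  -- A ∩ S = C
  have key1 : A ∩ {x : Fin p → ℝ | x i0 < 1/2} = C := by
    ext x
    simp only [hA, hC, Set.mem_inter_iff, Set.mem_setOf_eq]
    constructor
    · rintro ⟨⟨hord, hpos, _⟩, hs⟩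
      exact ⟨hord, hpos, by linarith⟩
    · rintro ⟨hord, hpos, hlt⟩
      have := hord i0 i1 h01
      exact ⟨⟨hord, hpos, by linarith⟩, by simp; linarith⟩
  -- T ⁻¹' C = A ∩ {1/2 < x i0}
  have key2 : T ⁻¹' C = A ∩ {x : Fin p → ℝ | 1/2 < x i0} := by
    ext x
    simp only [hA, hC, Set.mem_preimage, Set.mem_inter_iff, Set.mem_setOf_eq]
    constructor
    · rintro ⟨hord, hpos, hlt⟩
      rw [hT0] at hlt
      have hx0 : 1/2 < x i0 := by linarith
      have h10 : x i1 < 1 - x i0 := by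
        have := hord i0 i1 h01
        rwa [hT0, hTj x i1 (h01.ne')] at this
      have hxle : ∀ j : Fin p, i0 < j → x j ≤ x i1 := by
        intro j hj
        rcases eq_or_lt_of_le (hle1 j hj) with h | h
        · rw [← h]
        · have := hord i1 j h
          rw [hTj x j (hj.ne'), hTj x i1 (h01.ne')] at this
          exact this.le
      refine ⟨⟨?_, ?_, by linarith⟩, hx0⟩
      · intro i j hij
        by_cases hi : i = i0
        · subst hi
          have := hxle j hij
          linarith
        · have := hord i j hij
          rwa [hTj x j (((hne0 i hi).trans hij).ne'),
            hTj x i hi] at this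
      · intro i
        by_cases hi : i = i0
        · subst hi; linarith
        · have := hpos i; rwa [hTj x i hi] at this
    · rintro ⟨⟨hord, hpos, hsum⟩, hhalf⟩
      have hx1pos := hpos i1
      refine ⟨?_, ?_, ?_⟩
      · intro i j hij
        by_cases hi : i = i0
        · have hij' : i0 < j := hi ▸ hij
          have hj0 : j ≠ i0 := hij'.ne'
          rw [hi, hT0, hTj x j hj0]
          rcases eq_or_lt_of_le (hle1 j hij') with h | h
          · rw [← h]; linarith
          · have := hord i1 j h; linarith
        · have hj0 : j ≠ i0 := ((hne0 i hi).trans hij).ne'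
          rw [hTj x j hj0, hTj x i hi]
          exact hord i j hij
      · intro i
        by_cases hi : i = i0
        · rw [hi, hT0]; linarith
        · rw [hTj x i hi]; exact hpos i
      · rw [hT0]; linarith
  -- split the volume of A
  have hsplit : volume (A ∩ {x : Fin p → ℝ | x i0 < 1/2}) +
      volume (A \ {x : Fin p → ℝ | x i0 < 1/2}) = volume A :=
    measure_inter_add_diff A hS
  have hdiff : volume (A \ {x : Fin p → ℝ | x i0 < 1/2}) = volume C := by
    have hplane : volume {x : Fin p → ℝ | x i0 = 1/2} = 0 := by
      have := Measure.pi_hyperplane (fun _ : Fin p => (volume : Measure ℝ)) i0 (1/2 : ℝ)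
      simpa [volume_pi] using this
    have hsub1 : T ⁻¹' C ⊆ A \ {x : Fin p → ℝ | x i0 < 1/2} := by
      rw [key2]
      rintro x ⟨hxA, hx⟩
      exact ⟨hxA, by simp only [Set.mem_setOf_eq] at hx ⊢; linarith⟩
    have hsub2 : A \ {x : Fin p → ℝ | x i0 < 1/2} ⊆
        T ⁻¹' C ∪ {x : Fin p → ℝ | x i0 = 1/2} := by
      rw [key2]
      rintro x ⟨hxA, hx⟩
      simp only [Set.mem_setOf_eq, not_lt] at hx
      rcases eq_or_lt_of_le hx with h | h
      · exact Or.inr h.symm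
      · exact Or.inl ⟨hxA, h⟩
    have hpre : volume (T ⁻¹' C) = volume C :=
      hT.measure_preimage hCmeas.nullMeasurableSet
    refine le_antisymm ?_ ?_
    · calc volume (A \ {x : Fin p → ℝ | x i0 < 1/2})
          ≤ volume (T ⁻¹' C ∪ {x : Fin p → ℝ | x i0 = 1/2}) := measure_mono hsub2
        _ ≤ volume (T ⁻¹' C) + volume {x : Fin p → ℝ | x i0 = 1/2} := measure_union_le _ _
        _ = volume C := by rw [hplane, hpre, add_zero]
    · rw [← hpre]; exact measure_mono hsub1
  rw [← hsplit, key1, hdiff, two_mul]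

/-- For the affine Weyl group of type `C_p`, the volume of the simplex `C_s` (cut out by the
short dominant root `θ_s = e₁ + e₂`) is `2` times the volume of the fundamental alcove `C`
(cut out by the highest root `θ = 2e₁`). -/
theorem volume_Cs_eq_Cp (p : ℕ) (hp : 2 ≤ p) :
    volume {x : Fin p → ℝ | (∀ i j : Fin p, i < j → x j < x i) ∧ (∀ i, 0 < x i) ∧
        x ⟨0, by omega⟩ + x ⟨1, by omega⟩ < 1}
      = 2 *
        volume {x : Fin p → ℝ | (∀ i j : Fin p, i < j → x j < x i) ∧ (∀ i, 0 < x i) ∧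
          2 * x ⟨0, by omega⟩ < 1} := by
  exact volume_Cs_eq_Cp_aux p hp _ _ rfl rfl
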